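/- For every n ≥ 1 and every n×n matrix M over the Laurent polynomial ring ℂ[T,T⁻¹] that is invertible over ℂ[T,T⁻¹], there exist an n×n matrix U with all entries of U and U⁻¹ lying in the polynomial subring ℂ[T], an n×n matrix V with all entries of V and V⁻¹ lying in the subring ℂ[T⁻¹], and integers k₁, …, k_n, such that U·M·V is the diagonal matrix with diagonal entries T^(k₁), …, T^(k_n). -/

import Mathlib

noncomputable section

/-- The subring `ℂ[T]` of polynomials in `T` inside the Laurent polynomial ring
`ℂ[T,T⁻¹]`. -/
def polyT : Subring (LaurentPolynomial ℂ) :=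
  Subring.closure (Set.range (LaurentPolynomial.C : ℂ →+* LaurentPolynomial ℂ) ∪
    {LaurentPolynomial.T 1})

/-- The subring `ℂ[T⁻¹]` of polynomials in `T⁻¹` inside the Laurent polynomial ring
`ℂ[T,T⁻¹]`. -/
def polyTinv : Subring (LaurentPolynomial ℂ) :=
  Subring.closure (Set.range (LaurentPolynomial.C : ℂ →+* LaurentPolynomial ℂ) ∪
    {LaurentPolynomial.T (-1)})

open LaurentPolynomial

namespace Birkhoff

abbrev RR := LaurentPolynomial ℂ
instance : CoeFun RR (fun _ => ℤ → ℂ) := ⟨fun f => f.coeff⟩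
abbrev sg (x : ℤ) (r : ℂ) : RR := AddMonoidAlgebra.ofCoeff (Finsupp.single x r)

lemma T_eq_sg (n : ℤ) : (T n : RR) = sg n 1 := rfl

lemma C_eq_sg (c : ℂ) : (C c : RR) = sg 0 c := by
  rw [sg, AddMonoidAlgebra.ofCoeff_single, single_eq_C_mul_T, T_zero, mul_one]

lemma sg_mul_sg (x y : ℤ) (r s : ℂ) : sg x r * sg y s = sg (x + y) (r * s) :=
  AddMonoidAlgebra.single_mul_single ..

lemma sg_mul_apply (x : ℤ) (r : ℂ) (g : RR) (m : ℤ) : (sg x r * g) m = r * g (-x + m) :=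
  AddMonoidAlgebra.coeff_single_mul_apply ..

lemma mul_sg_apply (g : RR) (r : ℂ) (x : ℤ) (m : ℤ) : (g * sg x r) m = g (m - x) * r := by
  rw [sub_eq_add_neg]; exact AddMonoidAlgebra.coeff_mul_single_apply ..

lemma mul_coeff_lt {f g : RR} {s t : ℤ} (hf : ∀ m, m < s → f m = 0)
    (hg : ∀ m, m < t → g m = 0) {m : ℤ} (hm : m < s + t) : (f * g) m = 0 := by
  rw [AddMonoidAlgebra.mul_apply, Finsupp.sum]
  refine Finset.sum_eq_zero fun a ha => ?_
  rw [Finsupp.sum]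
  refine Finset.sum_eq_zero fun b hb => ?_
  have h1 : s ≤ a := le_of_not_gt fun h => (Finsupp.mem_support_iff.1 ha) (hf a h)
  have h2 : t ≤ b := le_of_not_gt fun h => (Finsupp.mem_support_iff.1 hb) (hg b h)
  exact if_neg (by omega)

lemma mul_coeff_gt {f g : RR} {s t : ℤ} (hf : ∀ m, s < m → f m = 0)
    (hg : ∀ m, t < m → g m = 0) {m : ℤ} (hm : s + t < m) : (f * g) m = 0 := by
  rw [AddMonoidAlgebra.mul_apply, Finsupp.sum]
  refine Finset.sum_eq_zero fun a ha => ?_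
  rw [Finsupp.sum]
  refine Finset.sum_eq_zero fun b hb => ?_
  have h1 : a ≤ s := le_of_not_gt fun h => (Finsupp.mem_support_iff.1 ha) (hf a h)
  have h2 : b ≤ t := le_of_not_gt fun h => (Finsupp.mem_support_iff.1 hb) (hg b h)
  exact if_neg (by omega)

lemma mul_coeff_eq {f g : RR} {s t : ℤ} (hf : ∀ m, m < s → f m = 0)
    (hg : ∀ m, m < t → g m = 0) : (f * g) (s + t) = f s * g t := by
  have hd : f * g = sg s (f s) * g + (f - sg s (f s)) * g := by ring
  have hf' : ∀ m, m < s + 1 → (f - sg s (f s)) m = 0 := by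
    intro m hm
    rw [AddMonoidAlgebra.coeff_sub, Finsupp.sub_apply]
    rcases eq_or_lt_of_le (Int.lt_add_one_iff.mp hm) with h | h
    · subst h; rw [Finsupp.single_eq_same, sub_self]
    · rw [hf m h, Finsupp.single_eq_of_ne' (by omega), sub_zero]
  rw [hd, AddMonoidAlgebra.coeff_add, Finsupp.add_apply, sg_mul_apply,
    mul_coeff_lt hf' hg (by omega), add_zero, neg_add_cancel_left]

lemma mul_coeff_eq_top {f g : RR} {s t : ℤ} (hf : ∀ m, s < m → f m = 0)
    (hg : ∀ m, t < m → g m = 0) : (f * g) (s + t) = f s * g t := by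
  have hd : f * g = sg s (f s) * g + (f - sg s (f s)) * g := by ring
  have hf' : ∀ m, s - 1 < m → (f - sg s (f s)) m = 0 := by
    intro m hm
    rw [AddMonoidAlgebra.coeff_sub, Finsupp.sub_apply]
    rcases eq_or_lt_of_le (by omega : s ≤ m) with h | h
    · subst h; rw [Finsupp.single_eq_same, sub_self]
    · rw [hf m h, Finsupp.single_eq_of_ne' (by omega), sub_zero]
  rw [hd, AddMonoidAlgebra.coeff_add, Finsupp.add_apply, sg_mul_apply,
    mul_coeff_gt hf' hg (by omega), add_zero, neg_add_cancel_left]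

/-- minimal exponent (junk value 0 for f = 0) -/
def ordz (f : RR) : ℤ := if h : f.coeff.support.Nonempty then f.coeff.support.min' h else 0

/-- maximal exponent -/
def topz (f : RR) : ℤ := if h : f.coeff.support.Nonempty then f.coeff.support.max' h else 0

lemma ordz_apply_ne {f : RR} (hf : f ≠ 0) : f (ordz f) ≠ 0 := by
  rw [ordz, dif_pos (Finsupp.support_nonempty_iff.2 (by simpa using hf))]
  exact Finsupp.mem_support_iff.1 (Finset.min'_mem _ _)

lemma topz_apply_ne {f : RR} (hf : f ≠ 0) : f (topz f) ≠ 0 := by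
  rw [topz, dif_pos (Finsupp.support_nonempty_iff.2 (by simpa using hf))]
  exact Finsupp.mem_support_iff.1 (Finset.max'_mem _ _)

lemma ordz_le {f : RR} {m : ℤ} (h : f m ≠ 0) : ordz f ≤ m := by
  have hm : m ∈ f.coeff.support := Finsupp.mem_support_iff.2 h
  rw [ordz, dif_pos ⟨m, hm⟩]
  exact Finset.min'_le _ _ hm

lemma le_topz {f : RR} {m : ℤ} (h : f m ≠ 0) : m ≤ topz f := by
  have hm : m ∈ f.coeff.support := Finsupp.mem_support_iff.2 h
  rw [topz, dif_pos ⟨m, hm⟩]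
  exact Finset.le_max' _ _ hm

lemma coeff_eq_zero_of_lt_ordz {f : RR} {m : ℤ} (h : m < ordz f) : f m = 0 := by
  by_contra hc
  exact absurd (ordz_le hc) (not_le.2 h)

lemma coeff_eq_zero_of_topz_lt {f : RR} {m : ℤ} (h : topz f < m) : f m = 0 := by
  by_contra hc
  exact absurd (le_topz hc) (not_le.2 h)

lemma ordz_eq {f : RR} {m : ℤ} (h1 : f m ≠ 0) (h2 : ∀ k, k < m → f k = 0) : ordz f = m := by
  refine le_antisymm (ordz_le h1) ?_
  by_contra h
  have hf : f ≠ 0 := fun hf => h1 (by simp [hf])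
  exact ordz_apply_ne hf (h2 _ (not_le.mp h))

lemma ordz_le_topz {f : RR} (hf : f ≠ 0) : ordz f ≤ topz f :=
  ordz_le (topz_apply_ne hf)

def Splus : Subring RR where
  carrier := {f : RR | ∀ m : ℤ, m < 0 → f m = 0}
  zero_mem' := fun _ _ => rfl
  one_mem' := by
    intro m hm
    rw [AddMonoidAlgebra.one_def]
    exact Finsupp.single_eq_of_ne' (by omega)
  add_mem' := by
    intro a b ha hb m hm
    rw [AddMonoidAlgebra.coeff_add, Finsupp.add_apply, ha m hm, hb m hm, add_zero]
  neg_mem' := by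
    intro a ha m hm
    rw [AddMonoidAlgebra.coeff_neg, Finsupp.neg_apply, ha m hm, neg_zero]
  mul_mem' := by
    intro a b ha hb m hm
    exact mul_coeff_lt ha hb (by omega)

def Sminus : Subring RR where
  carrier := {f : RR | ∀ m : ℤ, 0 < m → f m = 0}
  zero_mem' := fun _ _ => rfl
  one_mem' := by
    intro m hm
    rw [AddMonoidAlgebra.one_def]
    exact Finsupp.single_eq_of_ne' (by omega)
  add_mem' := by
    intro a b ha hb m hm
    rw [AddMonoidAlgebra.coeff_add, Finsupp.add_apply, ha m hm, hb m hm, add_zero]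
  neg_mem' := by
    intro a ha m hm
    rw [AddMonoidAlgebra.coeff_neg, Finsupp.neg_apply, ha m hm, neg_zero]
  mul_mem' := by
    intro a b ha hb m hm
    exact mul_coeff_gt ha hb (by omega)

lemma mem_Splus {f : RR} : f ∈ Splus ↔ ∀ m : ℤ, m < 0 → f m = 0 := Iff.rfl
lemma mem_Sminus {f : RR} : f ∈ Sminus ↔ ∀ m : ℤ, 0 < m → f m = 0 := Iff.rfl

lemma sg_mem_Splus {x : ℤ} (hx : 0 ≤ x) (r : ℂ) : sg x r ∈ Splus := by
  intro m hm
  exact Finsupp.single_eq_of_ne' (by omega)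

lemma sg_mem_Sminus {x : ℤ} (hx : x ≤ 0) (r : ℂ) : sg x r ∈ Sminus := by
  intro m hm
  exact Finsupp.single_eq_of_ne' (by omega)

lemma sum_sg (f : RR) : ∑ x ∈ f.coeff.support, sg x (f x) = f := by
  ext m
  rw [AddMonoidAlgebra.coeff_sum, Finset.sum_apply']
  rw [Finset.sum_eq_single m]
  · exact Finsupp.single_eq_same
  · intro b _ hb
    exact Finsupp.single_eq_of_ne' hb
  · intro hm
    rw [Finsupp.single_eq_same]
    exact Finsupp.notMem_support_iff.1 hm

lemma Splus_le_polyT {f : RR} (hf : f ∈ Splus) : f ∈ polyT := by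
  have hs : (∑ x ∈ f.coeff.support, sg x (f x)) ∈ polyT := by
    refine Subring.sum_mem _ fun x hx => ?_
    have hx0 : 0 ≤ x := by
      by_contra h
      exact Finsupp.mem_support_iff.1 hx (hf x (by omega))
    rw [sg, AddMonoidAlgebra.ofCoeff_single, single_eq_C_mul_T]
    refine Subring.mul_mem _ (Subring.subset_closure (Set.mem_union_left _ ⟨f x, rfl⟩)) ?_
    have hT : (T x : RR) = (T 1) ^ x.toNat := by
      rw [T_pow, mul_one, Int.toNat_of_nonneg hx0]
    rw [hT]
    have h1 : (T 1 : RR) ∈ polyT := Subring.subset_closure (Set.mem_union_right _ rfl)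
    exact pow_mem h1 _
  rwa [sum_sg] at hs

lemma Sminus_le_polyTinv {f : RR} (hf : f ∈ Sminus) : f ∈ polyTinv := by
  have hs : (∑ x ∈ f.coeff.support, sg x (f x)) ∈ polyTinv := by
    refine Subring.sum_mem _ fun x hx => ?_
    have hx0 : x ≤ 0 := by
      by_contra h
      exact Finsupp.mem_support_iff.1 hx (hf x (by omega))
    rw [sg, AddMonoidAlgebra.ofCoeff_single, single_eq_C_mul_T]
    refine Subring.mul_mem _ (Subring.subset_closure (Set.mem_union_left _ ⟨f x, rfl⟩)) ?_
    have hT : (T x : RR) = (T (-1)) ^ (-x).toNat := by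
      rw [T_pow]
      congr 1
      omega
    rw [hT]
    have h1 : (T (-1) : RR) ∈ polyTinv := Subring.subset_closure (Set.mem_union_right _ rfl)
    exact pow_mem h1 _
  rwa [sum_sg] at hs

/-- evaluation at `T = 0` as a ring hom on `Splus` -/
def phi : Splus →+* ℂ where
  toFun f := (f : RR) 0
  map_one' := by
    show ((1 : RR)) 0 = 1
    rw [AddMonoidAlgebra.one_def]
    exact Finsupp.single_eq_same
  map_mul' := by
    intro a b
    show ((a : RR) * (b : RR)) 0 = (a : RR) 0 * (b : RR) 0
    have := mul_coeff_eq (s := 0) (t := 0) a.2 b.2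
    simpa using this
  map_zero' := rfl
  map_add' := by
    intro a b
    exact Finsupp.add_apply _ _ _

lemma det_mem {n : ℕ} {S : Subring RR} {A : Matrix (Fin n) (Fin n) RR}
    (h : ∀ i j, A i j ∈ S) : A.det ∈ S := by
  rw [Matrix.det_apply']
  exact Subring.sum_mem _ fun σ _ =>
    Subring.mul_mem _ (intCast_mem S _) (Subring.prod_mem _ fun i _ => h _ _)

lemma adjugate_mem {n : ℕ} {S : Subring RR} {A : Matrix (Fin n) (Fin n) RR}
    (h : ∀ i j, A i j ∈ S) (i j : Fin n) : A.adjugate i j ∈ S := by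
  rw [Matrix.adjugate_apply]
  refine det_mem fun a b => ?_
  rw [Matrix.updateRow_apply]
  split
  · rcases eq_or_ne b i with rfl | hb
    · rw [Pi.single_eq_same]; exact Subring.one_mem S
    · rw [Pi.single_eq_of_ne hb]; exact Subring.zero_mem S
  · exact h a b

lemma matmul_mem {n : ℕ} {S : Subring RR} {A B : Matrix (Fin n) (Fin n) RR}
    (hA : ∀ i j, A i j ∈ S) (hB : ∀ i j, B i j ∈ S) (i j : Fin n) : (A * B) i j ∈ S := by
  rw [Matrix.mul_apply]
  exact Subring.sum_mem _ fun k _ => Subring.mul_mem _ (hA i k) (hB k j)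

lemma one_mem_mat {n : ℕ} (S : Subring RR) (i j : Fin n) : (1 : Matrix (Fin n) (Fin n) RR) i j ∈ S := by
  rw [Matrix.one_apply]
  split
  · exact Subring.one_mem S
  · exact Subring.zero_mem S

lemma isUnit_nonneg_eq_C {f : RR} (hu : IsUnit f) (hnn : f ∈ Splus)
    (h0 : f 0 ≠ 0) : ∃ c : ℂ, c ≠ 0 ∧ f = C c := by
  obtain ⟨g, hg⟩ := hu.exists_right_inv
  have hf0 : f ≠ 0 := fun h => by simp [h] at hg
  have hg0 : g ≠ 0 := fun h => by simp [h] at hg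
  have hone : ∀ m : ℤ, m ≠ 0 → (1 : RR) m = 0 := by
    intro m hm
    rw [AddMonoidAlgebra.one_def]
    exact Finsupp.single_eq_of_ne' (Ne.symm hm)
  -- bottom: ordz g = 0
  have hbot : (f * g) (0 + ordz g) = f 0 * g (ordz g) :=
    mul_coeff_eq hnn (fun m hm => coeff_eq_zero_of_lt_ordz hm)
  have hbotne : (f * g) (0 + ordz g) ≠ 0 := by
    rw [hbot]; exact mul_ne_zero h0 (ordz_apply_ne hg0)
  have hog : ordz g = 0 := by
    by_contra h
    exact hbotne (by rw [hg]; exact hone _ (by omega))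
  -- top
  have htop : (f * g) (topz f + topz g) = f (topz f) * g (topz g) :=
    mul_coeff_eq_top (fun m hm => coeff_eq_zero_of_topz_lt hm)
      (fun m hm => coeff_eq_zero_of_topz_lt hm)
  have htopne : (f * g) (topz f + topz g) ≠ 0 := by
    rw [htop]; exact mul_ne_zero (topz_apply_ne hf0) (topz_apply_ne hg0)
  have htf : topz f + topz g = 0 := by
    by_contra h
    exact htopne (by rw [hg]; exact hone _ h)
  have hof : ordz f = 0 := ordz_eq h0 (fun k hk => hnn k hk)
  have h1 : topz f = 0 := by
    have h2 : ordz g ≤ topz g := ordz_le_topz hg0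
    have h3 : ordz f ≤ topz f := ordz_le_topz hf0
    omega
  refine ⟨f 0, h0, ?_⟩
  rw [C_eq_sg]
  ext m
  rcases eq_or_ne m 0 with rfl | hm
  · rw [Finsupp.single_eq_same]
  · rw [Finsupp.single_eq_of_ne' (Ne.symm hm)]
    by_contra hc
    have := ordz_le hc
    have := le_topz hc
    omega

end Birkhoff

namespace Birkhoff

def colSet {n : ℕ} (v : Fin n → RR) : Finset ℤ := Finset.univ.biUnion fun i => (v i).coeff.support

def vecMin {n : ℕ} (v : Fin n → RR) : ℤ :=
  if h : (colSet v).Nonempty then (colSet v).min' h else 0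

lemma vecMin_spec1 {n : ℕ} {v : Fin n → RR} (i : Fin n) {m : ℤ} (hm : m < vecMin v) :
    v i m = 0 := by
  by_contra hc
  have hmem : m ∈ colSet v :=
    Finset.mem_biUnion.2 ⟨i, Finset.mem_univ i, Finsupp.mem_support_iff.2 hc⟩
  rw [vecMin, dif_pos ⟨m, hmem⟩] at hm
  exact absurd (Finset.min'_le _ m hmem) (not_le.2 hm)

lemma vecMin_spec2 {n : ℕ} {v : Fin n → RR} (hv : ∃ i, v i ≠ 0) :
    ∃ i, v i (vecMin v) ≠ 0 := by
  obtain ⟨i, hi⟩ := hv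
  have hne : (colSet v).Nonempty := by
    obtain ⟨m, hm⟩ := Finsupp.support_nonempty_iff.2 (show (v i).coeff ≠ 0 by simpa using hi)
    exact ⟨m, Finset.mem_biUnion.2 ⟨i, Finset.mem_univ i, hm⟩⟩
  rw [vecMin, dif_pos hne]
  obtain ⟨i', _, hi'⟩ := Finset.mem_biUnion.1 (Finset.min'_mem (colSet v) hne)
  exact ⟨i', Finsupp.mem_support_iff.1 hi'⟩

lemma col_ne_zero {n : ℕ} {A : Matrix (Fin n) (Fin n) RR} (h : A.det ≠ 0) (j : Fin n) :
    ∃ i, A i j ≠ 0 := by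
  by_contra hc
  push_neg at hc
  exact h (Matrix.det_eq_zero_of_column_eq_zero j hc)

lemma prod_T {n : ℕ} (s : Finset (Fin n)) (f : Fin n → ℤ) :
    ∏ j ∈ s, (T (f j) : RR) = T (∑ j ∈ s, f j) := by
  induction s using Finset.cons_induction with
  | empty => simp
  | cons a s ha ih => rw [Finset.prod_cons, Finset.sum_cons, ih, T_add]

lemma sg_zero_one : sg 0 1 = (1 : RR) := AddMonoidAlgebra.one_def.symm

lemma mul_updateCol_one {n : ℕ} (j₀ : Fin n) (A : Matrix (Fin n) (Fin n) RR)
    (z : Fin n → RR) (a b : Fin n) :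
    (A * ((1 : Matrix (Fin n) (Fin n) RR).updateCol j₀ z)) a b =
      if b = j₀ then ∑ k, A a k * z k else A a b := by
  by_cases hb : b = j₀
  · subst hb
    rw [if_pos rfl, Matrix.mul_apply]
    exact Finset.sum_congr rfl fun k _ => by rw [Matrix.updateCol_apply, if_pos rfl]
  · rw [if_neg hb, Matrix.mul_apply]
    have h2 : ∀ k, A a k * ((1 : Matrix (Fin n) (Fin n) RR).updateCol j₀ z) k b
        = A a k * (1 : Matrix (Fin n) (Fin n) RR) k b := by
      intro k
      rw [Matrix.updateCol_apply, if_neg hb]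
    rw [Finset.sum_congr rfl fun k _ => h2 k, ← Matrix.mul_apply, Matrix.mul_one]

lemma sum_updateOne {n : ℕ} (j₀ : Fin n) (x : Fin n → RR) (z : Fin n → RR) (a : Fin n) :
    ∑ k, ((1 : Matrix (Fin n) (Fin n) RR).updateCol j₀ x) a k * z k
      = x a * z j₀ + (if a = j₀ then 0 else z a) := by
  rw [← Finset.sum_erase_add _ _ (Finset.mem_univ j₀)]
  have h2 : ∀ k ∈ Finset.univ.erase j₀,
      ((1 : Matrix (Fin n) (Fin n) RR).updateCol j₀ x) a k * z k
      = if k = a then z k else 0 := by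
    intro k hk
    rw [Matrix.updateCol_apply, if_neg (Finset.mem_erase.1 hk).1, Matrix.one_apply]
    by_cases h : a = k
    · subst h
      rw [if_pos rfl, if_pos rfl, one_mul]
    · rw [if_neg h, if_neg (Ne.symm h), zero_mul]
  rw [Finset.sum_congr rfl h2, Finset.sum_ite_eq' _ a z,
    Matrix.updateCol_apply, if_pos rfl]
  by_cases h : a = j₀
  · subst h
    rw [if_neg (Finset.notMem_erase a _), if_pos rfl, zero_add, add_zero]
  · rw [if_pos (Finset.mem_erase.2 ⟨h, Finset.mem_univ a⟩), if_neg h, add_comm]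

lemma elem_mul_inv {n : ℕ} (j₀ : Fin n) (x : Fin n → RR) (y : RR)
    (hxy : x j₀ * y = 1) :
    ((1 : Matrix (Fin n) (Fin n) RR).updateCol j₀ x) *
      ((1 : Matrix (Fin n) (Fin n) RR).updateCol j₀
        (fun a => if a = j₀ then y else -(y * x a))) = 1 := by
  refine Matrix.ext fun a b => ?_
  rw [mul_updateCol_one]
  by_cases hb : b = j₀
  · rw [hb, if_pos rfl, sum_updateOne]
    by_cases ha : a = j₀
    · rw [ha, Matrix.one_apply_eq]
      simp only [eq_self_iff_true, if_true]
      rw [add_zero, hxy]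
    · rw [Matrix.one_apply_ne (hb ▸ ha)]
      simp only [eq_self_iff_true, if_true, if_neg ha]
      ring
  · rw [if_neg hb, Matrix.updateCol_apply, if_neg hb]

lemma inv_mul_elem {n : ℕ} (j₀ : Fin n) (x : Fin n → RR) (y : RR)
    (hyx : y * x j₀ = 1) :
    ((1 : Matrix (Fin n) (Fin n) RR).updateCol j₀
        (fun a => if a = j₀ then y else -(y * x a))) *
      ((1 : Matrix (Fin n) (Fin n) RR).updateCol j₀ x) = 1 := by
  refine Matrix.ext fun a b => ?_
  rw [mul_updateCol_one]
  by_cases hb : b = j₀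
  · rw [hb, if_pos rfl, sum_updateOne]
    by_cases ha : a = j₀
    · rw [ha, Matrix.one_apply_eq]
      simp only [eq_self_iff_true, if_true]
      rw [add_zero, hyx]
    · rw [Matrix.one_apply_ne (hb ▸ ha)]
      simp only [eq_self_iff_true, if_true, if_neg ha]
      have h3 : -(y * x a) * x j₀ + x a = -(y * x j₀ * x a) + x a := by ring
      rw [h3, hyx, one_mul, neg_add_cancel]
  · rw [if_neg hb, Matrix.updateCol_apply, if_neg hb]

end Birkhoff

namespace Birkhoff

lemma key {n : ℕ} : ∀ (N : ℕ) (M : Matrix (Fin n) (Fin n) RR), IsUnit M.det →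
    (ordz (M.det * T (-(∑ j, vecMin (fun i => M i j))))).toNat < N →
    ∃ (V Vinv W Winv : Matrix (Fin n) (Fin n) RR) (k : Fin n → ℤ),
      (∀ i j, V i j ∈ Sminus ∧ Vinv i j ∈ Sminus) ∧
      (∀ i j, W i j ∈ Splus ∧ Winv i j ∈ Splus) ∧
      V * Vinv = 1 ∧ Vinv * V = 1 ∧ W * Winv = 1 ∧ Winv * W = 1 ∧
      M * V = W * Matrix.diagonal (fun j => T (k j)) := by
  intro N
  induction N with
  | zero => intro M _ h; omega
  | succ N ih =>
    intro M hu hm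
    classical
    set e : Fin n → ℤ := fun j => vecMin (fun i => M i j) with he
    have heApp : ∀ j, vecMin (fun i => M i j) = e j := fun j => by rw [he]
    have hdet0 : M.det ≠ 0 := hu.ne_zero
    set Nc : Matrix (Fin n) (Fin n) RR := M * Matrix.diagonal (fun j => T (-(e j))) with hNc
    have hNcoeff : ∀ i j (m : ℤ), Nc i j m = M i j (m + e j) := by
      intro i j m
      rw [hNc, Matrix.mul_diagonal, T_eq_sg, mul_sg_apply,
        mul_one, sub_neg_eq_add]
    have hNmem : ∀ i j, Nc i j ∈ Splus := by
      intro i j m hm'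
      rw [hNcoeff]
      refine vecMin_spec1 (v := fun a => M a j) i ?_
      rw [heApp j]
      omega
    have hdetNc : Nc.det = M.det * T (-(∑ j, e j)) := by
      rw [hNc, Matrix.det_mul, Matrix.det_diagonal, prod_T]
      congr 2
      rw [Finset.sum_neg_distrib]
    have hdetNc_ne : Nc.det ≠ 0 := by
      rw [hdetNc]
      exact mul_ne_zero hdet0 (isUnit_T _).ne_zero
    have hdetNc_mem : Nc.det ∈ Splus := det_mem hNmem
    set N0 : Matrix (Fin n) (Fin n) ℂ := Matrix.of (fun i j => Nc i j 0) with hN0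
    have hg0 : Nc.det 0 = N0.det := by
      set Ntil : Matrix (Fin n) (Fin n) Splus :=
        Matrix.of (fun i j => (⟨Nc i j, hNmem i j⟩ : Splus)) with hNtil
      have h1 : Splus.subtype.mapMatrix Ntil = Nc := by
        refine Matrix.ext fun i j => ?_
        rfl
      have h2 : Nc.det = (Splus.subtype Ntil.det : RR) := by
        rw [RingHom.map_det, h1]
      have h3 : phi.mapMatrix Ntil = N0 := by
        refine Matrix.ext fun i j => ?_
        rfl
      have h4 : Nc.det 0 = phi Ntil.det := by rw [h2]; rfl
      rw [h4, RingHom.map_det, h3]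
    have hgeq : M.det * T (-(∑ j, e j)) = Nc.det := hdetNc.symm
    by_cases hde : N0.det = 0
    · -- dependent case: do one column operation and recurse
      obtain ⟨c, hc0, hcv⟩ := Matrix.exists_mulVec_eq_zero_iff.2 hde
      set s : Finset (Fin n) := Finset.univ.filter (fun j => c j ≠ 0) with hs
      have hsne : s.Nonempty := by
        obtain ⟨j, hj⟩ := Function.ne_iff.1 hc0
        exact ⟨j, Finset.mem_filter.2 ⟨Finset.mem_univ j, hj⟩⟩
      obtain ⟨j₀, hj₀s, hj₀min⟩ := Finset.exists_min_image s e hsne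
      have hc0' : c j₀ ≠ 0 := (Finset.mem_filter.1 hj₀s).2
      set x : Fin n → RR := fun k => sg (e j₀ - e k) (c k) with hx
      set y : RR := sg 0 (c j₀)⁻¹ with hy
      have hxj₀ : x j₀ = sg 0 (c j₀) := by
        rw [hx]
        show sg (e j₀ - e j₀) (c j₀) = sg 0 (c j₀)
        rw [sub_self]
      have hxy : x j₀ * y = 1 := by
        rw [hxj₀, hy, sg_mul_sg, add_zero, mul_inv_cancel₀ hc0', sg_zero_one]
      have hyx : y * x j₀ = 1 := by
        rw [hxj₀, hy, sg_mul_sg, add_zero, inv_mul_cancel₀ hc0', sg_zero_one]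
      set E : Matrix (Fin n) (Fin n) RR := (1 : Matrix (Fin n) (Fin n) RR).updateCol j₀ x
        with hE
      set F : Matrix (Fin n) (Fin n) RR := (1 : Matrix (Fin n) (Fin n) RR).updateCol j₀
        (fun a => if a = j₀ then y else -(y * x a)) with hF
      have hEF : E * F = 1 := elem_mul_inv j₀ x y hxy
      have hFE : F * E = 1 := inv_mul_elem j₀ x y hyx
      have hxmem : ∀ i, x i ∈ Sminus := by
        intro i
        rw [hx]
        show sg (e j₀ - e i) (c i) ∈ Sminus
        rcases eq_or_ne (c i) 0 with h | h
        · rw [h, sg, Finsupp.single_zero]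
          exact Subring.zero_mem _
        · refine sg_mem_Sminus ?_ _
          have := hj₀min i (Finset.mem_filter.2 ⟨Finset.mem_univ i, h⟩)
          omega
      have hEmem : ∀ i j, E i j ∈ Sminus := by
        intro i j
        rw [hE, Matrix.updateCol_apply]
        split
        · exact hxmem i
        · exact one_mem_mat _ i j
      have hymem : y ∈ Sminus := by
        rw [hy]
        exact sg_mem_Sminus le_rfl _
      have hFmem : ∀ i j, F i j ∈ Sminus := by
        intro i j
        rw [hF, Matrix.updateCol_apply]
        split
        · split
          · exact hymem
          · exact Subring.neg_mem _ (Subring.mul_mem _ hymem (hxmem i))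
        · exact one_mem_mat _ i j
      set M' : Matrix (Fin n) (Fin n) RR := M * E with hM'
      have hdetE : E.det = sg 0 (c j₀) := by
        rw [hE, ← Matrix.cramer_apply, Matrix.cramer_one, ← hxj₀]
        rfl
      have hdetM' : M'.det = M.det * sg 0 (c j₀) := by
        rw [hM', Matrix.det_mul, hdetE]
      have huE : IsUnit (sg 0 (c j₀) : RR) := IsUnit.of_mul_eq_one y (hxj₀ ▸ hxy)
      have hu' : IsUnit M'.det := by
        rw [hdetM']
        exact hu.mul huE
      have hcolM' : ∀ a b, M' a b = if b = j₀ then ∑ k, M a k * x k else M a b := by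
        intro a b
        rw [hM', hE]
        exact mul_updateCol_one j₀ M x a b
      have hcol_eq : ∀ j, j ≠ j₀ → ∀ i, M' i j = M i j := by
        intro j hj i
        rw [hcolM', if_neg hj]
      set e' : Fin n → ℤ := fun j => vecMin (fun i => M' i j) with he'
      have he'App : ∀ j, vecMin (fun i => M' i j) = e' j := fun j => by rw [he']
      have he'_eq : ∀ j, j ≠ j₀ → e' j = e j := by
        intro j hj
        rw [he', he]
        show vecMin (fun i => M' i j) = vecMin (fun i => M i j)
        congr 1
        funext i
        exact hcol_eq j hj i
      have hM'coeff : ∀ i (m : ℤ), M' i j₀ m = ∑ k, M i k (m - (e j₀ - e k)) * c k := by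
        intro i m
        rw [hcolM', if_pos rfl, AddMonoidAlgebra.coeff_sum, Finset.sum_apply' m]
        refine Finset.sum_congr rfl fun k _ => ?_
        rw [hx]
        exact mul_sg_apply _ _ _ _
      have hlow : ∀ i (m : ℤ), m ≤ e j₀ → M' i j₀ m = 0 := by
        intro i m hm'
        rw [hM'coeff]
        rcases eq_or_lt_of_le hm' with h | h
        · have hterm : ∀ k, M i k (m - (e j₀ - e k)) * c k = N0 i k * c k := by
            intro k
            have h5 : m - (e j₀ - e k) = 0 + e k := by omega
            rw [h5, ← hNcoeff]
            rfl
          rw [Finset.sum_congr rfl fun k _ => hterm k]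
          have h6 := congrFun hcv i
          simpa [Matrix.mulVec, dotProduct] using h6
        · refine Finset.sum_eq_zero fun k _ => ?_
          rw [vecMin_spec1 i (show m - (e j₀ - e k) < vecMin (fun i => M i k) by
            rw [heApp k]; omega), zero_mul]
      have hcol' : ∀ j, ∃ i, M' i j ≠ 0 := col_ne_zero hu'.ne_zero
      have he'j₀ : e j₀ + 1 ≤ e' j₀ := by
        by_contra h
        obtain ⟨i, hi⟩ := vecMin_spec2 (hcol' j₀)
        rw [he'App j₀] at hi
        exact hi (hlow i _ (by omega))
      have hsum' : ∑ j, e' j = (∑ j, e j) + (e' j₀ - e j₀) := by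
        rw [← Finset.sum_erase_add _ e' (Finset.mem_univ j₀),
          ← Finset.sum_erase_add _ e (Finset.mem_univ j₀),
          Finset.sum_congr rfl (fun j hj => he'_eq j (Finset.mem_erase.1 hj).1)]
        ring
      set d : ℤ := e' j₀ - e j₀ with hd
      have hd1 : 1 ≤ d := by omega
      set g : RR := M.det * T (-(∑ j, e j)) with hg
      have hgNc : g = Nc.det := by rw [hg, hdetNc]
      have hgne : g ≠ 0 := by rw [hgNc]; exact hdetNc_ne
      set g' : RR := M'.det * T (-(∑ j, e' j)) with hg'
      have hg'eq : g' = sg 0 (c j₀) * (g * T (-d)) := by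
        rw [hg', hdetM', hsum', hg]
        have h7 : (T (-((∑ j, e j) + d)) : RR) = T (-(∑ j, e j)) * T (-d) := by
          rw [← T_add]
          congr 1
          ring
        rw [h7]
        ring
      have hg'coeff : ∀ m : ℤ, g' m = c j₀ * g (m + d) := by
        intro m
        rw [hg'eq, sg_mul_apply, neg_zero, zero_add,
          T_eq_sg, mul_sg_apply, mul_one, sub_neg_eq_add]
      have hordg' : ordz g' = ordz g - d := by
        refine ordz_eq ?_ ?_
        · rw [hg'coeff]
          have h8 : ordz g - d + d = ordz g := by ring
          rw [h8]
          exact mul_ne_zero hc0' (ordz_apply_ne hgne)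
        · intro k hk
          rw [hg'coeff, coeff_eq_zero_of_lt_ordz (by omega), mul_zero]
      have hordg_lb : 0 ≤ ordz g := by
        by_contra h
        refine ordz_apply_ne hgne ?_
        have h' : Nc.det (ordz g) = 0 := hdetNc_mem (ordz g) (by omega)
        rwa [← hgNc] at h'
      have hordg_pos : 1 ≤ ordz g := by
        rcases eq_or_lt_of_le hordg_lb with h | h
        · exfalso
          refine ordz_apply_ne hgne ?_
          rw [← h, hgNc, hg0, hde]
        · omega
      have hm'2 : (ordz g').toNat < N := by
        have h9 : (ordz g).toNat < N + 1 := hm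
        rw [hordg']
        revert h9 hordg_pos hd1
        generalize ordz g = B
        generalize d = D
        intros
        omega
      obtain ⟨V', Vinv', W, Winv, k, hVmem', hWmem, hVV', hV'V, hWW, hW'W, hfact⟩ :=
        ih M' hu' hm'2
      refine ⟨E * V', Vinv' * F, W, Winv, k, ?_, hWmem, ?_, ?_, hWW, hW'W, ?_⟩
      · intro i j
        exact ⟨matmul_mem hEmem (fun i j => (hVmem' i j).1) i j,
          matmul_mem (fun i j => (hVmem' i j).2) hFmem i j⟩
      · rw [Matrix.mul_assoc E V', ← Matrix.mul_assoc V' Vinv' F, hVV', Matrix.one_mul, hEF]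
      · rw [Matrix.mul_assoc Vinv' F, ← Matrix.mul_assoc F E V', hFE, Matrix.one_mul, hV'V]
      · rw [← Matrix.mul_assoc, ← hM', hfact]
    · -- independent case: finish
      have huNc : IsUnit Nc.det := by
        rw [hdetNc]
        exact hu.mul (isUnit_T _)
      have hne0 : Nc.det 0 ≠ 0 := by
        rw [hg0]
        exact hde
      obtain ⟨cst, hcst, hCeq⟩ := isUnit_nonneg_eq_C huNc hdetNc_mem hne0
      refine ⟨1, 1, Nc, C cst⁻¹ • Nc.adjugate, e, ?_, ?_, Matrix.mul_one 1, Matrix.mul_one 1,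
        ?_, ?_, ?_⟩
      · intro i j
        exact ⟨one_mem_mat _ i j, one_mem_mat _ i j⟩
      · intro i j
        constructor
        · exact hNmem i j
        · rw [Matrix.smul_apply, smul_eq_mul]
          refine Subring.mul_mem _ ?_ (adjugate_mem hNmem i j)
          rw [C_eq_sg]
          exact sg_mem_Splus le_rfl _
      · rw [Matrix.mul_smul, Matrix.mul_adjugate, hCeq, smul_smul, ← map_mul,
          inv_mul_cancel₀ hcst, map_one, one_smul]
      · rw [Matrix.smul_mul, Matrix.adjugate_mul, hCeq, smul_smul, ← map_mul,
          inv_mul_cancel₀ hcst, map_one, one_smul]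
      · rw [Matrix.mul_one, hNc, Matrix.mul_assoc, Matrix.diagonal_mul_diagonal]
        have hTT : (fun i => (T (-(e i)) : RR) * T (e i)) = fun _ => (1 : RR) := by
          funext j
          rw [← T_add, neg_add_cancel, T_zero]
        rw [hTT, Matrix.diagonal_one, Matrix.mul_one]

end Birkhoff

open Birkhoff

/-- Grothendieck–Birkhoff factorization: for every `n ≥ 1` and every
`n×n` matrix `M` over `ℂ[T,T⁻¹]` invertible over `ℂ[T,T⁻¹]`, there exist a matrix `U`
with `U`, `U⁻¹` having entries in `ℂ[T]`, a matrix `V` with `V`, `V⁻¹` having entries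
in `ℂ[T⁻¹]`, and integers `k₁, …, k_n`, such that `U·M·V = diag(T^(k₁), …, T^(k_n))`. -/
theorem statement_16 (n : ℕ) (hn : 1 ≤ n)
    (M Minv : Matrix (Fin n) (Fin n) (LaurentPolynomial ℂ))
    (h1 : M * Minv = 1) (h2 : Minv * M = 1) :
    ∃ (U Uinv V Vinv : Matrix (Fin n) (Fin n) (LaurentPolynomial ℂ)) (k : Fin n → ℤ),
      U * Uinv = 1 ∧ Uinv * U = 1 ∧ V * Vinv = 1 ∧ Vinv * V = 1 ∧
      (∀ i j, U i j ∈ polyT ∧ Uinv i j ∈ polyT) ∧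
      (∀ i j, V i j ∈ polyTinv ∧ Vinv i j ∈ polyTinv) ∧
      U * M * V = Matrix.diagonal fun i => LaurentPolynomial.T (k i) := by
  have hu : IsUnit M.det := by
    refine IsUnit.of_mul_eq_one Minv.det ?_
    rw [← Matrix.det_mul, h1, Matrix.det_one]
  obtain ⟨V, Vinv, W, Winv, k, hVmem, hWmem, hVV, hV'V, hWW, hW'W, hfact⟩ :=
    key ((ordz (M.det * LaurentPolynomial.T (-(∑ j, vecMin (fun i => M i j))))).toNat + 1)
      M hu (Nat.lt_succ_self _)
  refine ⟨Winv, W, V, Vinv, k, hW'W, hWW, hVV, hV'V, ?_, ?_, ?_⟩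
  · intro i j
    exact ⟨Splus_le_polyT (hWmem i j).2, Splus_le_polyT (hWmem i j).1⟩
  · intro i j
    exact ⟨Sminus_le_polyTinv (hVmem i j).1, Sminus_le_polyTinv (hVmem i j).2⟩
  · rw [Matrix.mul_assoc, hfact, ← Matrix.mul_assoc, hW'W, Matrix.one_mul]
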